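/- Assume moreover that 1 < β ≤ G, where G = (1+√5)/2 is the golden mean. Then for every n ≥ 1 one has κ(n) ≤ 2^{⌊n/2⌋+1}. -/

import Mathlib

/-!
For a word `w` over `{0, a₁, a₂}`, `T^|w|` maps `Δ(w)` affinely, with slope `β^|w|`, onto
an interval `[0, h(w))`, and appending a digit `b` replaces `h` by `min (β h) e_b - b`,
where `Δ(b) = [b/β, e_b/β)`. Hence `Δ(w)` has positive measure iff `h(w) > 0` and is full
iff `h(w) = a₁`, so whether `u v ∈ B_{|u|+|v|}` depends, beyond `u ∈ B_{|u|}`, only on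
`h(u)` and `v`. After height `h` the digit `0` is admissible only if `β h < a₁` and `a₁`
only if `β h > a₁`, so at most two digits are admissible, and at most one if `β h ≤ a₂`.
Since `β² ≤ β + 1`, the height after a nonzero digit satisfies `β h ≤ a₂`. So every word
of `Bₙ` has at most two admissible two-letter extensions, `κ(n+2) ≤ 2 κ(n)`, and the
bound follows from `κ(1), κ(2) ≤ 2`.
-/

open MeasureTheory Set

/-- The greedy β-transformation with deleted digit set `{0, a₁, a₂}`:
`T x = βx` on `Δ(0) = [0, a₁/β)`, `T x = βx − a₁` on `Δ(a₁) = [a₁/β, a₂/β)`,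
and `T x = βx − a₂` on `Δ(a₂) = [a₂/β, a₁)`. -/
noncomputable def greedyT (β a₁ a₂ : ℝ) (x : ℝ) : ℝ :=
  if x < a₁ / β then β * x
  else if x < a₂ / β then β * x - a₁
  else β * x - a₂

/-- The interval `Δ(b)` associated to a digit `b ∈ {0, a₁, a₂}`. -/
noncomputable def digitInt (β a₁ a₂ : ℝ) (b : ℝ) : Set ℝ :=
  if b = 0 then Set.Ico 0 (a₁ / β)
  else if b = a₁ then Set.Ico (a₁ / β) (a₂ / β)
  else Set.Ico (a₂ / β) a₁

/-- The fundamental interval `Δ(w) = ⋂_{k < n} T⁻ᵏ Δ(b_k)` of a word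
`w = (b₀, …, b_{n−1})`. -/
noncomputable def cyl (β a₁ a₂ : ℝ) (w : List ℝ) : Set ℝ :=
  ⋂ k ∈ Finset.range w.length,
    (greedyT β a₁ a₂)^[k] ⁻¹' digitInt β a₁ a₂ (w.getD k 0)

/-- `w` is a word over the alphabet `A = {0, a₁, a₂}`. -/
def isWord (a₁ a₂ : ℝ) (w : List ℝ) : Prop := ∀ b ∈ w, b = 0 ∨ b = a₁ ∨ b = a₂

/-- The fundamental interval `Δ(w)` is full: `λ(Δ(w)) = a₁/β^|w|`. -/
def isFull (β a₁ a₂ : ℝ) (w : List ℝ) : Prop :=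
  volume (cyl β a₁ a₂ w) = ENNReal.ofReal (a₁ / β ^ w.length)

/-- Condition (6): `a₁ · max (β−1) 1 < a₂ < a₁ · min 2 β`. -/
def condition6 (β a₁ a₂ : ℝ) : Prop :=
  a₁ * max (β - 1) 1 < a₂ ∧ a₂ < a₁ * min 2 β

/-- `w ∈ Bₙ`: `w` is a word of length `n` over `A` with `λ(Δ(w)) > 0`, `Δ(w)`
non-full, and `Δ(w′)` non-full for every nonempty proper prefix `w′` of `w`. -/
def memB (β a₁ a₂ : ℝ) (n : ℕ) (w : List ℝ) : Prop :=
  w.length = n ∧ isWord a₁ a₂ w ∧ 0 < volume (cyl β a₁ a₂ w) ∧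
    ¬ isFull β a₁ a₂ w ∧
    ∀ w' : List ℝ, w' ≠ [] → w' <+: w → w' ≠ w → ¬ isFull β a₁ a₂ w'

/-- `κ(n)`: the number of elements of `Bₙ`. -/
noncomputable def kappa (β a₁ a₂ : ℝ) (n : ℕ) : ℕ :=
  {w : List ℝ | memB β a₁ a₂ n w}.ncard

section Geometry

variable {β a₁ a₂ : ℝ}

/-- `Δ(b) = [b/β, digitEnd b/β)` for each digit `b`, so `T` maps `Δ(b)` onto
`[0, digitEnd b - b)`. -/
noncomputable def digitEnd (β a₁ a₂ b : ℝ) : ℝ :=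
  if b = 0 then a₁ else if b = a₁ then a₂ else β * a₁

noncomputable def heightStep (β a₁ a₂ h b : ℝ) : ℝ :=
  min (β * h) (digitEnd β a₁ a₂ b) - b

noncomputable def height (β a₁ a₂ : ℝ) (w : List ℝ) : ℝ :=
  w.foldl (heightStep β a₁ a₂) a₁

@[simp] lemma height_nil : height β a₁ a₂ [] = a₁ := rfl

@[simp] lemma height_append_singleton (w : List ℝ) (b : ℝ) :
    height β a₁ a₂ (w ++ [b]) = heightStep β a₁ a₂ (height β a₁ a₂ w) b := by
  simp [height]

lemma digitInt_eq (hβ : 0 < β) (ha₁ : 0 < a₁) (h12 : a₁ < a₂) {b : ℝ}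
    (hb : b = 0 ∨ b = a₁ ∨ b = a₂) :
    digitInt β a₁ a₂ b = Ico (b / β) (digitEnd β a₁ a₂ b / β) := by
  rcases hb with rfl | rfl | rfl <;>
    simp [digitInt, digitEnd, ha₁.ne', (ha₁.trans h12).ne', h12.ne', hβ.ne']

lemma digitInt_subset_Ico (hβ : 1 ≤ β) (ha₁ : 0 < a₁) (h12 : a₁ < a₂) (ha₂ : a₂ ≤ β * a₁)
    (b : ℝ) : digitInt β a₁ a₂ b ⊆ Ico 0 a₁ := by
  have hβ0 : 0 < β := zero_lt_one.trans_le hβ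
  have h₁ : a₁ / β ≤ a₁ := div_le_self ha₁.le hβ
  have h₂ : a₂ / β ≤ a₁ := (div_le_iff₀ hβ0).2 (by linarith)
  have h₀ : 0 ≤ a₁ / β := by positivity
  have h₀' : 0 ≤ a₂ / β := div_nonneg (ha₁.trans h12).le hβ0.le
  unfold digitInt
  split_ifs <;> exact Ico_subset_Ico (by linarith) (by linarith)

lemma greedyT_of_mem_digitInt (hβ : 0 < β) (ha₁ : 0 < a₁) (h12 : a₁ < a₂) {b y : ℝ}
    (hb : b = 0 ∨ b = a₁ ∨ b = a₂) (hy : y ∈ digitInt β a₁ a₂ b) :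
    greedyT β a₁ a₂ y = β * y - b := by
  have hq : a₁ / β < a₂ / β := div_lt_div_of_pos_right h12 hβ
  rw [digitInt_eq hβ ha₁ h12 hb] at hy
  obtain ⟨hy₁, hy₂⟩ := hy
  unfold greedyT
  rcases hb with hb | hb | hb <;> subst b <;>
    simp only [digitEnd, if_pos, if_neg ha₁.ne', if_neg (ha₁.trans h12).ne',
      if_neg h12.ne', mul_div_cancel_left₀ _ hβ.ne'] at hy₁ hy₂ <;>
    split_ifs <;> first | ring1 | linarith

lemma cyl_append (u : List ℝ) (b : ℝ) :
    cyl β a₁ a₂ (u ++ [b]) =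
      cyl β a₁ a₂ u ∩ (greedyT β a₁ a₂)^[u.length] ⁻¹' digitInt β a₁ a₂ b := by
  rw [cyl, cyl, List.length_append, List.length_singleton, Finset.range_add_one,
    Finset.set_biInter_insert, inter_comm]
  congr 1
  · refine iInter₂_congr fun k hk => ?_
    rw [List.getD_append u [b] 0 k (by simpa using hk)]
  · rw [List.getD_append_right u [b] 0 u.length le_rfl]
    simp

lemma cyl_take_subset (w : List ℝ) (n : ℕ) : cyl β a₁ a₂ w ⊆ cyl β a₁ a₂ (w.take n) := by
  simp only [cyl, subset_def, mem_iInter, Finset.mem_range, List.length_take, lt_min_iff]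
  intro x hx k ⟨hkn, hkw⟩
  rw [List.getD_eq_getElem?_getD, List.getElem?_take, if_pos hkn,
    ← List.getD_eq_getElem?_getD]
  exact hx k hkw

lemma cyl_subset_Ico (hβ : 1 ≤ β) (ha₁ : 0 < a₁) (h12 : a₁ < a₂) (ha₂ : a₂ ≤ β * a₁)
    {w : List ℝ} (hw : w ≠ []) : cyl β a₁ a₂ w ⊆ Ico 0 a₁ :=
  (iInter₂_subset 0 (Finset.mem_range.2 (List.length_pos_iff.2 hw))).trans
    (digitInt_subset_Ico hβ ha₁ h12 ha₂ _)

lemma mem_Ico_add_div_iff {c : ℝ} (hc : 0 < c) (l h x : ℝ) :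
    x ∈ Ico l (l + h / c) ↔ c * (x - l) ∈ Ico 0 h := by
  simp only [mem_Ico, ← sub_lt_iff_lt_add', lt_div_iff₀' hc, sub_nonneg,
    mul_nonneg_iff_of_pos_left hc]

lemma mem_Ico_inter_Ico_div_iff (hβ : 0 < β) {b : ℝ} (hb : 0 ≤ b) (y h e : ℝ) :
    y ∈ Ico 0 h ∩ Ico (b / β) (e / β) ↔ β * y - b ∈ Ico 0 (min (β * h) e - b) := by
  simp only [mem_inter_iff, mem_Ico, div_le_iff₀' hβ, lt_div_iff₀' hβ, sub_nonneg,
    sub_lt_sub_iff_right, lt_min_iff, mul_lt_mul_iff_right₀ hβ]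
  constructor
  · rintro ⟨⟨-, hyh⟩, hby, hye⟩
    exact ⟨hby, hyh, hye⟩
  · rintro ⟨hby, hyh, hye⟩
    exact ⟨⟨nonneg_of_mul_nonneg_right (hb.trans hby) hβ, hyh⟩, hby, hye⟩

/-- The intersection with `[0, a₁)` only matters for the empty word, whose cylinder is
all of `ℝ`. -/
lemma exists_cyl_inter_Ico_eq (hβ : 0 < β) (ha₁ : 0 < a₁) (h12 : a₁ < a₂) {w : List ℝ}
    (hw : isWord a₁ a₂ w) :
    ∃ l, cyl β a₁ a₂ w ∩ Ico 0 a₁ = Ico l (l + height β a₁ a₂ w / β ^ w.length) ∧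
      ∀ x ∈ cyl β a₁ a₂ w ∩ Ico 0 a₁,
        (greedyT β a₁ a₂)^[w.length] x = β ^ w.length * (x - l) := by
  induction w using List.reverseRecOn with
  | nil => exact ⟨0, by simp [cyl], by simp⟩
  | append_singleton u b ih =>
    have hb : b = 0 ∨ b = a₁ ∨ b = a₂ := hw b (by simp)
    have hb0 : 0 ≤ b := by rcases hb with rfl | rfl | rfl <;> linarith
    obtain ⟨l, hcyl, haff⟩ := ih fun c hc => hw c (by simp [hc])
    have hmem : ∀ x, x ∈ cyl β a₁ a₂ (u ++ [b]) ∩ Ico 0 a₁ ↔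
        x ∈ Ico l (l + height β a₁ a₂ u / β ^ u.length) ∧
          β ^ u.length * (x - l) ∈ digitInt β a₁ a₂ b := by
      intro x
      rw [cyl_append, inter_right_comm, mem_inter_iff, mem_preimage, ← hcyl]
      exact and_congr_right fun hx => by rw [haff x hx]
    have hβn : 0 < β ^ u.length := pow_pos hβ _
    refine ⟨l + b / β ^ (u.length + 1), Set.ext fun x => ?_, fun x hx => ?_⟩
    · have hshift : β ^ (u.length + 1) * (x - (l + b / β ^ (u.length + 1)))
          = β * (β ^ u.length * (x - l)) - b := by
        field_simp
        ring
      rw [hmem, mem_Ico_add_div_iff hβn, digitInt_eq hβ ha₁ h12 hb, ← mem_inter_iff,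
        mem_Ico_inter_Ico_div_iff hβ hb0, List.length_append, List.length_singleton,
        height_append_singleton, mem_Ico_add_div_iff (pow_pos hβ _), hshift, heightStep]
    · obtain ⟨hx, hT⟩ := (hmem x).1 hx
      rw [← hcyl] at hx
      rw [List.length_append, List.length_singleton, Function.iterate_succ_apply',
        haff x hx, greedyT_of_mem_digitInt hβ ha₁ h12 hb hT]
      field_simp
      ring

lemma volume_cyl (hβ : 1 < β) (ha₁ : 0 < a₁) (h12 : a₁ < a₂) (ha₂ : a₂ ≤ β * a₁)
    {w : List ℝ} (hw : isWord a₁ a₂ w) (hne : w ≠ []) :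
    volume (cyl β a₁ a₂ w) = ENNReal.ofReal (height β a₁ a₂ w / β ^ w.length) := by
  obtain ⟨l, hcyl, -⟩ := exists_cyl_inter_Ico_eq (zero_lt_one.trans hβ) ha₁ h12 hw
  rw [← inter_eq_left.2 (cyl_subset_Ico hβ.le ha₁ h12 ha₂ hne), hcyl, Real.volume_Ico,
    add_sub_cancel_left]

end Geometry

section Counting

variable {β a₁ a₂ : ℝ}

lemma memB.not_isFull {n : ℕ} {w w' : List ℝ} (hw : memB β a₁ a₂ n w) (hne : w' ≠ [])
    (hpre : w' <+: w) : ¬isFull β a₁ a₂ w' := by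
  by_cases h : w' = w
  · exact h ▸ hw.2.2.2.1
  · exact hw.2.2.2.2 w' hne hpre h

lemma memB.take {n k : ℕ} {w : List ℝ} (hw : memB β a₁ a₂ (n + k) w) (hn : n ≠ 0) :
    memB β a₁ a₂ n (w.take n) := by
  have hlen : (w.take n).length = n := by simp [hw.1]
  have hne : w.take n ≠ [] := fun h => hn (by simpa [h] using hlen.symm)
  refine ⟨hlen, fun b hb => hw.2.1 b (List.mem_of_mem_take hb),
    hw.2.2.1.trans_le (measure_mono (cyl_take_subset w n)),
    hw.not_isFull hne (List.take_prefix n w),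
    fun w' hne' hpre _ => hw.not_isFull hne' (hpre.trans (List.take_prefix n w))⟩

lemma memB.height_pos_and_ne (hβ : 1 < β) (ha₁ : 0 < a₁) (h12 : a₁ < a₂)
    (ha₂ : a₂ ≤ β * a₁) {n : ℕ} {w : List ℝ} (hw : memB β a₁ a₂ n w) (hn : n ≠ 0) :
    0 < height β a₁ a₂ w ∧ height β a₁ a₂ w ≠ a₁ := by
  have hne : w ≠ [] := fun h => hn (by simpa [h] using hw.1.symm)
  have hvol := volume_cyl hβ ha₁ h12 ha₂ hw.2.1 hne
  refine ⟨?_, fun h => hw.2.2.2.1 ?_⟩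
  · have := hw.2.2.1
    rwa [hvol, ENNReal.ofReal_pos,
      div_pos_iff_of_pos_right (pow_pos (by linarith) _)] at this
  · rw [isFull, hvol, h]

/-- The digits `b` for which `Δ(u b)` has positive measure and is non-full, given
that `T^|u|` maps `Δ(u)` onto `[0, h)`. -/
noncomputable def admissibleDigits (β a₁ a₂ h : ℝ) : Finset ℝ :=
  ({0, a₁, a₂} : Finset ℝ).filter fun b =>
    0 < heightStep β a₁ a₂ h b ∧ heightStep β a₁ a₂ h b ≠ a₁

lemma mem_admissibleDigits {h b : ℝ} :
    b ∈ admissibleDigits β a₁ a₂ h ↔ (b = 0 ∨ b = a₁ ∨ b = a₂) ∧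
      0 < heightStep β a₁ a₂ h b ∧ heightStep β a₁ a₂ h b ≠ a₁ := by
  simp [admissibleDigits]

lemma lt_mul_of_mem_admissibleDigits {h b : ℝ} (hb : b ∈ admissibleDigits β a₁ a₂ h) :
    b < β * h := by
  have := (mem_admissibleDigits.1 hb).2.1
  rw [heightStep] at this
  linarith [min_le_left (β * h) (digitEnd β a₁ a₂ b)]

lemma mul_lt_of_zero_mem_admissibleDigits {h : ℝ} (h0 : 0 ∈ admissibleDigits β a₁ a₂ h) :
    β * h < a₁ := by
  have hne := (mem_admissibleDigits.1 h0).2.2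
  simp only [heightStep, digitEnd, if_pos, sub_zero] at hne
  exact lt_of_not_ge fun hge => hne (min_eq_right hge)

lemma card_admissibleDigits_le_two (h : ℝ) : (admissibleDigits β a₁ a₂ h).card ≤ 2 := by
  by_cases hlow : β * h < a₁
  · refine (Finset.card_le_card fun b hb => ?_).trans
      (Finset.card_le_two (a := 0) (b := a₂))
    rcases (mem_admissibleDigits.1 hb).1 with rfl | rfl | rfl
    · simp
    · exact absurd hlow (lt_mul_of_mem_admissibleDigits hb).not_gt
    · simp
  · refine (Finset.card_le_card fun b hb => ?_).trans
      (Finset.card_le_two (a := a₁) (b := a₂))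
    rcases (mem_admissibleDigits.1 hb).1 with rfl | rfl | rfl
    · exact absurd (mul_lt_of_zero_mem_admissibleDigits hb) hlow
    all_goals simp

lemma card_admissibleDigits_le_one {h : ℝ} (hh : β * h ≤ a₂) :
    (admissibleDigits β a₁ a₂ h).card ≤ 1 := by
  refine Finset.card_le_one.2 fun b hb c hc => ?_
  have key : ∀ d ∈ admissibleDigits β a₁ a₂ h, d = if β * h < a₁ then 0 else a₁ := by
    intro d hd
    have hlt := lt_mul_of_mem_admissibleDigits hd
    rcases (mem_admissibleDigits.1 hd).1 with rfl | rfl | rfl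
    · simp [mul_lt_of_zero_mem_admissibleDigits hd]
    · simp [hlt.le.not_gt]
    · exact absurd hh hlt.not_ge
  rw [key b hb, key c hc]

/-- This is where `β ≤ G` enters: it leaves at most one admissible digit after a nonzero
one. -/
lemma mul_heightStep_le (hβ : 1 < β) (hgold : β ^ 2 ≤ β + 1) (ha₁ : 0 < a₁)
    (h12 : a₁ < a₂) (ha₂ : a₂ ≤ β * a₁) (h : ℝ) {c : ℝ} (hc : c = a₁ ∨ c = a₂) :
    β * heightStep β a₁ a₂ h c ≤ a₂ := by
  rcases hc with hc | hc <;> subst c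
  · have hstep : heightStep β a₁ a₂ h a₁ ≤ a₂ - a₁ := by
      simp only [heightStep, digitEnd, if_neg ha₁.ne', if_pos]
      linarith [min_le_right (β * h) a₂]
    nlinarith
  · have hstep : heightStep β a₁ a₂ h a₂ ≤ β * a₁ - a₂ := by
      simp only [heightStep, digitEnd, if_neg (ha₁.trans h12).ne', if_neg h12.ne']
      linarith [min_le_right (β * h) (β * a₁)]
    nlinarith

/-- `extensions k h`: the words `v` of length `k` such that, if `T^|u|` maps `Δ(u)` onto
`[0, h)`, every nonempty prefix `v'` of `v` gives a non-full `Δ(u v')` of positive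
measure. -/
noncomputable def extensions (β a₁ a₂ : ℝ) : ℕ → ℝ → Finset (List ℝ)
  | 0, _ => {[]}
  | k + 1, h => (admissibleDigits β a₁ a₂ h).biUnion fun c =>
      (extensions β a₁ a₂ k (heightStep β a₁ a₂ h c)).image (c :: ·)

lemma drop_mem_extensions (hβ : 1 < β) (ha₁ : 0 < a₁) (h12 : a₁ < a₂) (ha₂ : a₂ ≤ β * a₁)
    {n k : ℕ} {w : List ℝ} (hw : memB β a₁ a₂ (n + k) w) :
    w.drop n ∈ extensions β a₁ a₂ k (height β a₁ a₂ (w.take n)) := by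
  induction k generalizing n with
  | zero => simp [extensions, hw.1]
  | succ k ih =>
    have hn : n < w.length := by rw [hw.1]; omega
    have hw' : memB β a₁ a₂ (n + 1 + k) w := by rwa [Nat.add_right_comm, Nat.add_assoc]
    have htake : w.take (n + 1) = w.take n ++ [w[n]] := (List.take_concat_get' w n hn).symm
    have hadm : w[n] ∈ admissibleDigits β a₁ a₂ (height β a₁ a₂ (w.take n)) := by
      rw [mem_admissibleDigits, ← height_append_singleton, ← htake]
      exact ⟨hw.2.1 _ (List.getElem_mem hn),
        (hw'.take n.succ_ne_zero).height_pos_and_ne hβ ha₁ h12 ha₂ n.succ_ne_zero⟩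
    rw [List.drop_eq_getElem_cons hn, extensions]
    refine Finset.mem_biUnion.2 ⟨w[n], hadm, Finset.mem_image.2 ⟨_, ?_, rfl⟩⟩
    rw [← height_append_singleton, ← htake]
    exact ih hw'

lemma card_extensions_succ_le (k : ℕ) (h : ℝ) :
    (extensions β a₁ a₂ (k + 1) h).card ≤
      ∑ c ∈ admissibleDigits β a₁ a₂ h,
        (extensions β a₁ a₂ k (heightStep β a₁ a₂ h c)).card :=
  Finset.card_biUnion_le.trans (Finset.sum_le_sum fun _ _ => Finset.card_image_le)

lemma card_extensions_one_le (h : ℝ) :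
    (extensions β a₁ a₂ 1 h).card ≤ (admissibleDigits β a₁ a₂ h).card := by
  simpa [extensions] using card_extensions_succ_le (β := β) (a₁ := a₁) (a₂ := a₂) 0 h

lemma card_extensions_two_le (hβ : 1 < β) (hgold : β ^ 2 ≤ β + 1) (ha₁ : 0 < a₁)
    (h12 : a₁ < a₂) (ha₂ : a₂ ≤ β * a₁) (h : ℝ) :
    (extensions β a₁ a₂ 2 h).card ≤ 2 := by
  refine (card_extensions_succ_le 1 h).trans ?_
  by_cases hh : β * h ≤ a₂
  · calc _ ≤ (admissibleDigits β a₁ a₂ h).card • 2 := Finset.sum_le_card_nsmul _ _ _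
          fun c _ => (card_extensions_one_le _).trans (card_admissibleDigits_le_two _)
      _ ≤ 1 • 2 := Nat.mul_le_mul_right _ (card_admissibleDigits_le_one hh)
  · have hnonzero : ∀ c ∈ admissibleDigits β a₁ a₂ h, c = a₁ ∨ c = a₂ := fun c hc => by
      rcases (mem_admissibleDigits.1 hc).1 with rfl | hc' | hc'
      · linarith [mul_lt_of_zero_mem_admissibleDigits hc]
      all_goals simp [hc']
    calc _ ≤ (admissibleDigits β a₁ a₂ h).card • 1 := Finset.sum_le_card_nsmul _ _ _
          fun c hc => (card_extensions_one_le _).trans (card_admissibleDigits_le_one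
            (mul_heightStep_le hβ hgold ha₁ h12 ha₂ h (hnonzero c hc)))
      _ ≤ 2 := by simpa using card_admissibleDigits_le_two h

lemma setOf_memB_subset_extensions (hβ : 1 < β) (ha₁ : 0 < a₁) (h12 : a₁ < a₂)
    (ha₂ : a₂ ≤ β * a₁) (k : ℕ) :
    {w | memB β a₁ a₂ k w} ⊆ extensions β a₁ a₂ k a₁ := fun w hw => by
  simpa using drop_mem_extensions hβ ha₁ h12 ha₂ (n := 0) (by simpa using hw)

lemma kappa_le_card_extensions (hβ : 1 < β) (ha₁ : 0 < a₁) (h12 : a₁ < a₂)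
    (ha₂ : a₂ ≤ β * a₁) (k : ℕ) : kappa β a₁ a₂ k ≤ (extensions β a₁ a₂ k a₁).card :=
  (Set.ncard_le_ncard (setOf_memB_subset_extensions hβ ha₁ h12 ha₂ k)).trans_eq
    (Set.ncard_coe_finset _)

lemma kappa_add_le (hβ : 1 < β) (ha₁ : 0 < a₁) (h12 : a₁ < a₂) (ha₂ : a₂ ≤ β * a₁)
    {k m : ℕ} (hm : ∀ h, (extensions β a₁ a₂ k h).card ≤ m) {n : ℕ} (hn : n ≠ 0) :
    kappa β a₁ a₂ (n + k) ≤ m * kappa β a₁ a₂ n := by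
  have hfin : {u | memB β a₁ a₂ n u}.Finite := (extensions β a₁ a₂ n a₁).finite_toSet.subset
    (setOf_memB_subset_extensions hβ ha₁ h12 ha₂ n)
  set S := hfin.toFinset.biUnion fun u =>
    (extensions β a₁ a₂ k (height β a₁ a₂ u)).image (u ++ ·)
  have hsub : {w | memB β a₁ a₂ (n + k) w} ⊆ S := fun w hw =>
    Finset.mem_biUnion.2 ⟨w.take n, hfin.mem_toFinset.2 (hw.take hn), Finset.mem_image.2
      ⟨w.drop n, drop_mem_extensions hβ ha₁ h12 ha₂ hw, List.take_append_drop n w⟩⟩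
  calc kappa β a₁ a₂ (n + k) ≤ S.card :=
        (Set.ncard_le_ncard hsub).trans_eq (Set.ncard_coe_finset _)
    _ ≤ hfin.toFinset.card • m := Finset.card_biUnion_le.trans
        (Finset.sum_le_card_nsmul _ _ _ fun _ _ => Finset.card_image_le.trans (hm _))
    _ = m * kappa β a₁ a₂ n := by
        rw [smul_eq_mul, mul_comm, kappa, Set.ncard_eq_toFinset_card _ hfin]

end Counting

lemma sq_le_add_one_of_le_goldenRatio {x : ℝ} (hx : 0 ≤ x) (hxφ : x ≤ Real.goldenRatio) :
    x ^ 2 ≤ x + 1 := by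
  nlinarith [Real.goldenRatio_sq, Real.one_lt_goldenRatio]

theorem stmt7_general (β a₁ a₂ : ℝ) (hβ1 : 1 < β)
    (hβG : β ≤ (1 + Real.sqrt 5) / 2)
    (ha₁ : 0 < a₁) (h12 : a₁ < a₂) (hc : condition6 β a₁ a₂) :
    ∀ n : ℕ, 1 ≤ n → kappa β a₁ a₂ n ≤ 2 ^ (n / 2 + 1) := by
  have hgold : β ^ 2 ≤ β + 1 := sq_le_add_one_of_le_goldenRatio (by linarith) hβG
  have ha₂ : a₂ ≤ β * a₁ := by
    linarith [hc.2, mul_le_mul_of_nonneg_left (min_le_right 2 β) ha₁.le]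
  have hstep : ∀ n ≠ 0, kappa β a₁ a₂ (n + 2) ≤ 2 * kappa β a₁ a₂ n := fun n =>
    kappa_add_le hβ1 ha₁ h12 ha₂ (card_extensions_two_le hβ1 hgold ha₁ h12 ha₂)
  suffices ∀ m, kappa β a₁ a₂ (m + 1) ≤ 2 ^ ((m + 1) / 2 + 1) from
    fun n hn => Nat.sub_add_cancel hn ▸ this (n - 1)
  intro m
  induction m using Nat.twoStepInduction with
  | zero =>
    exact (kappa_le_card_extensions hβ1 ha₁ h12 ha₂ 1).trans
      ((card_extensions_one_le _).trans (card_admissibleDigits_le_two _))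
  | one =>
    exact (kappa_le_card_extensions hβ1 ha₁ h12 ha₂ 2).trans
      ((card_extensions_two_le hβ1 hgold ha₁ h12 ha₂ _).trans (by norm_num))
  | more m ih _ =>
    calc kappa β a₁ a₂ (m + 2 + 1)
        ≤ 2 * kappa β a₁ a₂ (m + 1) := hstep (m + 1) m.succ_ne_zero
      _ ≤ 2 * 2 ^ ((m + 1) / 2 + 1) := Nat.mul_le_mul_left 2 ih
      _ = 2 ^ ((m + 2 + 1) / 2 + 1) := by
        rw [← pow_succ']
        congr 1
        omega

/-- If moreover `1 < β ≤ G` where `G = (1+√5)/2` is the golden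
mean, then for every `n ≥ 1` one has `κ(n) ≤ 2^(⌊n/2⌋+1)`. -/
theorem stmt7 (β a₁ a₂ : ℝ) (hβ1 : 1 < β) (hβ3 : β < 3)
    (hβG : β ≤ (1 + Real.sqrt 5) / 2)
    (ha₁ : 0 < a₁) (h12 : a₁ < a₂) (hc : condition6 β a₁ a₂) :
    ∀ n : ℕ, 1 ≤ n → kappa β a₁ a₂ n ≤ 2 ^ (n / 2 + 1) :=
  stmt7_general β a₁ a₂ hβ1 hβG ha₁ h12 hc
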